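/- arXiv:1902.08876 — 5 statements merged into one kernel-verified Lean document; each statement's English description precedes it below -/
import Mathlib

section
/- For every integer m ≥ 2, the quantity γ_m = 4·16^{−m}·∑_{b=0}^{m−1} binom(2m−2, 2b)·C_{m−1−b}·C_b satisfies γ_m ≤ 1/(4(m−1)²). -/
/-!
With `n = m - 1` we have `γ_m = S n / (4·16ⁿ)`, where `S n = ∑_b C(2n,2b)·C_{n-b}·C_b`, so the
claim is `n²·S n ≤ 16ⁿ`. Writing Catalan numbers through central binomials, each summand
satisfies `(n+1)²·C(2n,2b)·C_{n-b}·C_b = C(2n,n)·C(n+1,b+1)·C(n+1,b)`, and by Vandermonde the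
sum of the right-hand factors is `C(2n+2,n+2) ≤ C(2n+2,n+1)`. Hence
`(n+1)³·S n ≤ 2(2n+1)·C(2n,n)²`, and the refined bound `C(2n,n)² ≤ 16ⁿ/(3n+1)` finishes the
proof.
-/

/-- The `m`-th term `γ_m = 4·16^{−m}·∑_{b=0}^{m−1} C(2m−2, 2b)·C_{m−1−b}·C_b`
of the series defining the isolated-vertex constant `γ`. -/
noncomputable def gammaTerm (m : ℕ) : ℝ :=
  4 * ((16 : ℝ) ^ m)⁻¹ *
    ∑ b ∈ Finset.range m,
      (Nat.choose (2 * m - 2) (2 * b) : ℝ) * (catalan (m - 1 - b) : ℝ) * (catalan b : ℝ)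

open Finset

namespace Nat

theorem centralBinom_sq_mul_le_sixteen_pow (n : ℕ) :
    centralBinom n ^ 2 * (3 * n + 1) ≤ 16 ^ n := by
  induction n with
  | zero => simp
  | succ n ih =>
    have hpos : 0 < (n + 1) ^ 2 * (3 * n + 1) := by positivity
    refine Nat.le_of_mul_le_mul_left ?_ hpos
    calc (n + 1) ^ 2 * (3 * n + 1) * (centralBinom (n + 1) ^ 2 * (3 * (n + 1) + 1))
        = (3 * n + 4) * (3 * n + 1) * ((n + 1) * centralBinom (n + 1)) ^ 2 := by ring
      _ = 4 * (2 * n + 1) ^ 2 * (3 * n + 4) * (centralBinom n ^ 2 * (3 * n + 1)) := by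
        rw [succ_mul_centralBinom_succ]; ring
      _ ≤ 4 * (2 * n + 1) ^ 2 * (3 * n + 4) * 16 ^ n := Nat.mul_le_mul_left _ ih
      _ ≤ 16 * ((n + 1) ^ 2 * (3 * n + 1)) * 16 ^ n := Nat.mul_le_mul_right _ (by nlinarith)
      _ = (n + 1) ^ 2 * (3 * n + 1) * 16 ^ (n + 1) := by ring

theorem sum_range_choose_succ_mul_choose (n : ℕ) :
    ∑ i ∈ range n, n.choose (i + 1) * n.choose i = (2 * n).choose (n + 1) := by
  rw [two_mul, add_choose_eq, Finset.Nat.sum_antidiagonal_eq_sum_range_succ_mk, sum_range_succ',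
    sum_range_succ]
  simp only [choose_zero_right, choose_succ_self, Nat.sub_zero, add_zero, zero_mul, one_mul]
  refine Finset.sum_congr rfl fun i hi => ?_
  rw [show n + 1 - (i + 1) = n - i by omega, choose_symm (by simp at hi; omega)]

theorem choose_two_mul_mul_centralBinom_mul_centralBinom {n b : ℕ} (hb : b ≤ n) :
    (2 * n).choose (2 * b) * centralBinom (n - b) * centralBinom b
      = centralBinom n * n.choose b ^ 2 := by
  have hcentral (k : ℕ) : centralBinom k * k ! * k ! = (2 * k)! := by
    simpa [centralBinom, two_mul] using choose_mul_factorial_mul_factorial (by omega : k ≤ 2 * k)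
  have hsplit : (2 * n).choose (2 * b) * (2 * b)! * (2 * (n - b))! = (2 * n)! := by
    rw [show 2 * (n - b) = 2 * n - 2 * b by omega]
    exact choose_mul_factorial_mul_factorial (by omega)
  refine Nat.eq_of_mul_eq_mul_right (by positivity : 0 < (b ! * (n - b)!) ^ 2) ?_
  calc (2 * n).choose (2 * b) * centralBinom (n - b) * centralBinom b * (b ! * (n - b)!) ^ 2
      = (2 * n).choose (2 * b) * (centralBinom b * b ! * b !)
          * (centralBinom (n - b) * (n - b)! * (n - b)!) := by ring
    _ = centralBinom n * n ! * n ! := by rw [hcentral, hcentral, hsplit, hcentral]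
    _ = centralBinom n * n.choose b ^ 2 * (b ! * (n - b)!) ^ 2 := by
      rw [← choose_mul_factorial_mul_factorial hb]; ring

theorem sq_succ_mul_choose_two_mul_mul_catalan_mul_catalan {n b : ℕ} (hb : b ≤ n) :
    (n + 1) ^ 2 * ((2 * n).choose (2 * b) * catalan (n - b) * catalan b)
      = centralBinom n * ((n + 1).choose (b + 1) * (n + 1).choose b) := by
  have hleft : (n + 1) * n.choose b = (n + 1).choose (b + 1) * (b + 1) :=
    add_one_mul_choose_eq n b
  have hright : (n + 1) * n.choose b = (n + 1).choose b * (n - b + 1) := by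
    rw [mul_comm, choose_mul_succ_eq, show n + 1 - b = n - b + 1 by omega]
  refine Nat.eq_of_mul_eq_mul_left (by positivity : 0 < (b + 1) * (n - b + 1)) ?_
  calc (b + 1) * (n - b + 1)
        * ((n + 1) ^ 2 * ((2 * n).choose (2 * b) * catalan (n - b) * catalan b))
      = (n + 1) ^ 2 * ((2 * n).choose (2 * b) * ((n - b + 1) * catalan (n - b))
          * ((b + 1) * catalan b)) := by ring
    _ = centralBinom n * ((n + 1) * n.choose b) * ((n + 1) * n.choose b) := by
      rw [succ_mul_catalan_eq_centralBinom, succ_mul_catalan_eq_centralBinom,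
        choose_two_mul_mul_centralBinom_mul_centralBinom hb]; ring
    _ = centralBinom n * ((n + 1).choose (b + 1) * (b + 1)) * ((n + 1).choose b * (n - b + 1)) := by
      rw [← hleft, ← hright]
    _ = (b + 1) * (n - b + 1) * (centralBinom n * ((n + 1).choose (b + 1) * (n + 1).choose b)) := by
      ring

end Nat

open Nat

def catalanChooseSum (n : ℕ) : ℕ :=
  ∑ b ∈ range (n + 1), (2 * n).choose (2 * b) * catalan (n - b) * catalan b

theorem sq_succ_mul_catalanChooseSum (n : ℕ) :
    (n + 1) ^ 2 * catalanChooseSum n = centralBinom n * (2 * (n + 1)).choose (n + 2) := by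
  rw [catalanChooseSum, mul_sum, ← sum_range_choose_succ_mul_choose, mul_sum]
  exact sum_congr rfl fun b hb =>
    sq_succ_mul_choose_two_mul_mul_catalan_mul_catalan (Nat.lt_succ_iff.mp (mem_range.mp hb))

theorem cube_succ_mul_catalanChooseSum_le (n : ℕ) :
    (n + 1) ^ 3 * catalanChooseSum n ≤ 2 * (2 * n + 1) * centralBinom n ^ 2 :=
  calc (n + 1) ^ 3 * catalanChooseSum n
      = (n + 1) * centralBinom n * (2 * (n + 1)).choose (n + 2) := by
        rw [pow_succ', mul_assoc, sq_succ_mul_catalanChooseSum]; ring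
    _ ≤ centralBinom n * ((n + 1) * centralBinom (n + 1)) := by
        rw [mul_comm (n + 1), mul_assoc]
        exact Nat.mul_le_mul_left _ (Nat.mul_le_mul_left _ (choose_le_centralBinom _ _))
    _ = 2 * (2 * n + 1) * centralBinom n ^ 2 := by rw [succ_mul_centralBinom_succ]; ring

theorem sq_mul_catalanChooseSum_le (n : ℕ) : n ^ 2 * catalanChooseSum n ≤ 16 ^ n := by
  have hpoly : n ^ 2 * (2 * (2 * n + 1)) ≤ (n + 1) ^ 3 * (3 * n + 1) := by nlinarith
  refine Nat.le_of_mul_le_mul_left ?_ (by positivity : 0 < (n + 1) ^ 3 * (3 * n + 1))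
  calc (n + 1) ^ 3 * (3 * n + 1) * (n ^ 2 * catalanChooseSum n)
      = n ^ 2 * (3 * n + 1) * ((n + 1) ^ 3 * catalanChooseSum n) := by ring
    _ ≤ n ^ 2 * (3 * n + 1) * (2 * (2 * n + 1) * centralBinom n ^ 2) :=
        Nat.mul_le_mul_left _ (cube_succ_mul_catalanChooseSum_le n)
    _ = n ^ 2 * (2 * (2 * n + 1)) * (centralBinom n ^ 2 * (3 * n + 1)) := by ring
    _ ≤ (n + 1) ^ 3 * (3 * n + 1) * 16 ^ n :=
        Nat.mul_le_mul hpoly (centralBinom_sq_mul_le_sixteen_pow n)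

theorem gammaTerm_succ (n : ℕ) : gammaTerm (n + 1) = catalanChooseSum n / (4 * 16 ^ n) := by
  have hidx : 2 * (n + 1) - 2 = 2 * n := by omega
  simp only [gammaTerm, catalanChooseSum, hidx, add_tsub_cancel_right, pow_succ, cast_sum,
    cast_mul]
  field_simp
  ring

/-- for every `m ≥ 2`, `γ_m ≤ 1/(4(m−1)²)`. -/
theorem gammaTerm_le (m : ℕ) (hm : 2 ≤ m) :
    gammaTerm m ≤ 1 / (4 * ((m : ℝ) - 1) ^ 2) := by
  obtain ⟨n, rfl⟩ : ∃ n, m = n + 1 := ⟨m - 1, by omega⟩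
  have hn : (0 : ℝ) < n := by exact_mod_cast (by omega : 0 < n)
  have hbound : (n : ℝ) ^ 2 * catalanChooseSum n ≤ 16 ^ n := by
    exact_mod_cast sq_mul_catalanChooseSum_le n
  rw [gammaTerm_succ, cast_add_one, add_sub_cancel_right, div_le_div_iff₀ (by positivity)
    (by positivity)]
  nlinarith
end

section
/- For any ε > 0 and any fixed c ∈ (0,1), d > 0, for all sufficiently large n: ∑ k^{−3/2}·ℓ^{−3/2}·min(k,ℓ) over integer pairs (k,ℓ) with d·log n ≤ k,ℓ ≤ cn, lies between (1−ε)·4·log n and (1+ε)·4·log n. -/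
open Real Finset Filter Asymptotics

/-!
Splitting the inner sum over `ℓ ∈ [a, b]` at `ℓ = k`,
  `∑_ℓ k^{-3/2} ℓ^{-3/2} min(k, ℓ) = k^{-3/2} ∑_{ℓ < k} ℓ^{-1/2} + k^{-1/2} ∑_{ℓ ≥ k} ℓ^{-3/2}`,
and comparing the two partial sums with the primitives `2√x` and `-2/√x` by telescoping shows
that it equals `4/k` up to errors `O(√a k^{-3/2} + b^{-1/2} k^{-1/2})`, whose sum over
`k ∈ [a, b]` is bounded. Hence the double sum is `4 log (b / a) + O(1)`, which for `a ≈ d log n`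
and `b ≈ c n` is `4 log n - O(log log n) = (4 + o(1)) log n`.
-/

lemma sum_Ico_le_sub_of_le {f F : ℕ → ℝ} {m n : ℕ} (hmn : m ≤ n)
    (h : ∀ i ∈ Ico m n, f i ≤ F (i + 1) - F i) : ∑ i ∈ Ico m n, f i ≤ F n - F m :=
  (sum_le_sum h).trans_eq (sum_Ico_sub F hmn)

lemma sub_le_sum_Ico_of_le {f F : ℕ → ℝ} {m n : ℕ} (hmn : m ≤ n)
    (h : ∀ i ∈ Ico m n, F (i + 1) - F i ≤ f i) : F n - F m ≤ ∑ i ∈ Ico m n, f i :=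
  (sum_Ico_sub F hmn).symm.trans_le (sum_le_sum h)

section Increments

variable {x : ℝ}

lemma one_div_sqrt_add_one_le_two_mul_sqrt_sub (hx : 0 ≤ x) :
    1 / √(x + 1) ≤ 2 * (√(x + 1) - √x) := by
  have ht : 0 < √(x + 1) := sqrt_pos.2 (by linarith)
  have hst : √x ≤ √(x + 1) := sqrt_le_sqrt (by linarith)
  rw [div_le_iff₀ ht]
  nlinarith [sq_sqrt hx, sq_sqrt (show 0 ≤ x + 1 by linarith)]

lemma two_mul_sqrt_add_one_sub_le_one_div_sqrt (hx : 0 < x) :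
    2 * (√(x + 1) - √x) ≤ 1 / √x := by
  have hs : 0 < √x := sqrt_pos.2 hx
  have hst : √x ≤ √(x + 1) := sqrt_le_sqrt (by linarith)
  rw [le_div_iff₀ hs]
  nlinarith [sq_sqrt hx.le, sq_sqrt (show 0 ≤ x + 1 by linarith)]

lemma one_div_mul_sqrt_add_one_le_two_div_sqrt_sub (hx : 0 < x) :
    1 / ((x + 1) * √(x + 1)) ≤ 2 / √x - 2 / √(x + 1) := by
  have hs : 0 < √x := sqrt_pos.2 hx
  have ht : 0 < √(x + 1) := sqrt_pos.2 (by linarith)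
  have hst : √x ≤ √(x + 1) := sqrt_le_sqrt (by linarith)
  have hs2 := sq_sqrt hx.le
  have ht2 := sq_sqrt (show 0 ≤ x + 1 by linarith)
  rw [div_sub_div _ _ hs.ne' ht.ne', div_le_div_iff₀ (by positivity) (by positivity)]
  nlinarith [mul_nonneg (mul_nonneg (sq_nonneg (√(x + 1) - √x))
    (by positivity : (0 : ℝ) ≤ 2 * √(x + 1) + √x)) ht.le]

lemma two_div_sqrt_sub_le_one_div_mul_sqrt (hx : 0 < x) :
    2 / √x - 2 / √(x + 1) ≤ 1 / (x * √x) := by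
  have hs : 0 < √x := sqrt_pos.2 hx
  have ht : 0 < √(x + 1) := sqrt_pos.2 (by linarith)
  have hst : √x ≤ √(x + 1) := sqrt_le_sqrt (by linarith)
  have hs2 := sq_sqrt hx.le
  have ht2 := sq_sqrt (show 0 ≤ x + 1 by linarith)
  rw [div_sub_div _ _ hs.ne' ht.ne', div_le_div_iff₀ (by positivity) (by positivity)]
  nlinarith [mul_pos hs ht, mul_nonneg (mul_pos hs ht).le (sub_nonneg.2 hst),
    mul_nonneg hs.le (sub_nonneg.2 hst)]

lemma one_div_add_one_le_log_add_one_sub_log (hx : 0 < x) :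
    1 / (x + 1) ≤ log (x + 1) - log x := by
  have h := one_sub_inv_le_log_of_pos (show 0 < (x + 1) / x by positivity)
  rw [log_div (by linarith) hx.ne', inv_div] at h
  have : 1 - x / (x + 1) = 1 / (x + 1) := by field_simp; ring
  linarith

lemma log_add_one_sub_log_le_one_div (hx : 0 < x) : log (x + 1) - log x ≤ 1 / x := by
  have h := log_le_sub_one_of_pos (show 0 < (x + 1) / x by positivity)
  rw [log_div (by linarith) hx.ne'] at h
  have : (x + 1) / x - 1 = 1 / x := by field_simp; ring
  linarith

end Increments

section SumBounds

variable {m n : ℕ}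

lemma sum_Ico_one_div_sqrt_le (hm : 1 ≤ m) (hmn : m ≤ n) :
    ∑ l ∈ Ico m n, 1 / √(l : ℝ) ≤ 2 * √((n : ℝ) - 1) := by
  have h := sum_Ico_le_sub_of_le (f := fun l : ℕ ↦ 1 / √(l : ℝ))
    (F := fun i : ℕ ↦ 2 * √((i : ℝ) - 1)) hmn fun i hi ↦ by
      have hi : (1 : ℝ) ≤ i := by exact_mod_cast hm.trans (mem_Ico.1 hi).1
      simpa [mul_sub] using one_div_sqrt_add_one_le_two_mul_sqrt_sub (sub_nonneg.2 hi)
  linarith [sqrt_nonneg ((m : ℝ) - 1)]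

lemma two_mul_sqrt_sub_le_sum_Ico_one_div_sqrt (hm : 1 ≤ m) (hmn : m ≤ n) :
    2 * √(n : ℝ) - 2 * √(m : ℝ) ≤ ∑ l ∈ Ico m n, 1 / √(l : ℝ) :=
  sub_le_sum_Ico_of_le (F := fun i : ℕ ↦ 2 * √(i : ℝ)) hmn fun i hi ↦ by
    have hi : (0 : ℝ) < i := Nat.cast_pos.2 (hm.trans (mem_Ico.1 hi).1)
    simpa [mul_sub] using two_mul_sqrt_add_one_sub_le_one_div_sqrt hi

lemma sum_Ico_one_div_mul_sqrt_le (hm : 2 ≤ m) (hmn : m ≤ n) :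
    ∑ l ∈ Ico m n, 1 / ((l : ℝ) * √(l : ℝ)) ≤ 2 / √((m : ℝ) - 1) := by
  have h := sum_Ico_le_sub_of_le (f := fun l : ℕ ↦ 1 / ((l : ℝ) * √(l : ℝ)))
    (F := fun i : ℕ ↦ -(2 / √((i : ℝ) - 1))) hmn fun i hi ↦ by
      have hi : (2 : ℝ) ≤ i := by exact_mod_cast hm.trans (mem_Ico.1 hi).1
      have := one_div_mul_sqrt_add_one_le_two_div_sqrt_sub (show 0 < (i : ℝ) - 1 by linarith)
      simp only [sub_add_cancel] at this
      push_cast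
      simp only [add_sub_cancel_right]
      linarith
  linarith [show 0 ≤ 2 / √((n : ℝ) - 1) by positivity]

lemma two_div_sqrt_sub_le_sum_Ico_one_div_mul_sqrt (hm : 1 ≤ m) (hmn : m ≤ n) :
    2 / √(m : ℝ) - 2 / √(n : ℝ) ≤ ∑ l ∈ Ico m n, 1 / ((l : ℝ) * √(l : ℝ)) := by
  have h := sub_le_sum_Ico_of_le (f := fun l : ℕ ↦ 1 / ((l : ℝ) * √(l : ℝ)))
    (F := fun i : ℕ ↦ -(2 / √(i : ℝ))) hmn fun i hi ↦ by
      have := two_div_sqrt_sub_le_one_div_mul_sqrt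
        (Nat.cast_pos.2 (hm.trans (mem_Ico.1 hi).1) : (0 : ℝ) < i)
      push_cast
      linarith
  linarith

lemma log_sub_log_le_sum_Ico_one_div (hm : 1 ≤ m) (hmn : m ≤ n) :
    log n - log m ≤ ∑ l ∈ Ico m n, 1 / (l : ℝ) :=
  sub_le_sum_Ico_of_le (F := fun i : ℕ ↦ log i) hmn fun i hi ↦ by
    simpa using log_add_one_sub_log_le_one_div
      (Nat.cast_pos.2 (hm.trans (mem_Ico.1 hi).1) : (0 : ℝ) < i)

lemma sum_Ico_one_div_sub_one_le (hm : 3 ≤ m) (hmn : m ≤ n) :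
    ∑ l ∈ Ico m n, 1 / ((l : ℝ) - 1) ≤ log ((n : ℝ) - 2) - log ((m : ℝ) - 2) :=
  sum_Ico_le_sub_of_le (F := fun i : ℕ ↦ log ((i : ℝ) - 2)) hmn fun i hi ↦ by
    have hi : (3 : ℝ) ≤ i := by exact_mod_cast hm.trans (mem_Ico.1 hi).1
    have := one_div_add_one_le_log_add_one_sub_log (show 0 < (i : ℝ) - 2 by linarith)
    push_cast
    ring_nf at this ⊢
    linarith

end SumBounds

-- Also at `x = 0`, where both sides are the junk value `0`.
lemma rpow_neg_three_div_two {x : ℝ} (hx : 0 ≤ x) : x ^ (-(3 : ℝ) / 2) = 1 / (x * √x) := by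
  rw [show -(3 : ℝ) / 2 = -(1 + 1 / 2) by norm_num, rpow_neg hx, rpow_add' hx (by norm_num),
    rpow_one, ← sqrt_eq_rpow, one_div]

lemma one_div_mul_sqrt_mul_self {x : ℝ} (hx : 0 ≤ x) : 1 / (x * √x) * x = 1 / √x := by
  rcases hx.eq_or_lt with rfl | hx
  · simp
  · field_simp

noncomputable def minWeight (k l : ℕ) : ℝ :=
  (k : ℝ) ^ (-(3 : ℝ) / 2) * (l : ℝ) ^ (-(3 : ℝ) / 2) * (min k l : ℕ)

noncomputable def minWeightedSum (a b : ℕ) : ℝ :=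
  ∑ k ∈ Icc a b, ∑ l ∈ Icc a b, minWeight k l

lemma minWeight_of_le {k l : ℕ} (h : l ≤ k) :
    minWeight k l = 1 / ((k : ℝ) * √(k : ℝ)) * (1 / √(l : ℝ)) := by
  rw [minWeight, min_eq_right h, rpow_neg_three_div_two (Nat.cast_nonneg k),
    rpow_neg_three_div_two (Nat.cast_nonneg l), mul_assoc,
    one_div_mul_sqrt_mul_self (Nat.cast_nonneg l)]

lemma minWeight_of_ge {k l : ℕ} (h : k ≤ l) :
    minWeight k l = 1 / √(k : ℝ) * (1 / ((l : ℝ) * √(l : ℝ))) := by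
  rw [minWeight, min_eq_left h, rpow_neg_three_div_two (Nat.cast_nonneg k),
    rpow_neg_three_div_two (Nat.cast_nonneg l), mul_right_comm,
    one_div_mul_sqrt_mul_self (Nat.cast_nonneg k)]

lemma sum_Icc_minWeight {a b k : ℕ} (hak : a ≤ k) (hkb : k ≤ b) :
    ∑ l ∈ Icc a b, minWeight k l =
      1 / ((k : ℝ) * √(k : ℝ)) * ∑ l ∈ Ico a k, 1 / √(l : ℝ) +
        1 / √(k : ℝ) * ∑ l ∈ Ico k (b + 1), 1 / ((l : ℝ) * √(l : ℝ)) := by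
  rw [← Ico_add_one_right_eq_Icc, ← sum_Ico_consecutive _ hak (by omega), mul_sum, mul_sum]
  congr 1
  · exact sum_congr rfl fun l hl ↦ minWeight_of_le (mem_Ico.1 hl).2.le
  · exact sum_congr rfl fun l hl ↦ minWeight_of_ge (mem_Ico.1 hl).1

lemma sum_Icc_minWeight_le {a b k : ℕ} (ha : 1 ≤ a) (hk : 2 ≤ k) (hak : a ≤ k)
    (hkb : k ≤ b) :
    ∑ l ∈ Icc a b, minWeight k l ≤ 4 / ((k : ℝ) - 1) := by
  have hk' : (2 : ℝ) ≤ k := by exact_mod_cast hk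
  have hs : 0 < √((k : ℝ) - 1) := sqrt_pos.2 (by linarith)
  have hss : √((k : ℝ) - 1) ≤ √(k : ℝ) := sqrt_le_sqrt (by linarith)
  have below :
      1 / ((k : ℝ) * √(k : ℝ)) * ∑ l ∈ Ico a k, 1 / √(l : ℝ) ≤ 2 / ((k : ℝ) - 1) :=
    calc _ ≤ 1 / ((k : ℝ) * √(k : ℝ)) * (2 * √(k : ℝ)) := by
          gcongr
          exact (sum_Ico_one_div_sqrt_le ha hak).trans (by linarith)
      _ = 2 / k := by field_simp
      _ ≤ 2 / ((k : ℝ) - 1) := by gcongr <;> linarith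
  have above : 1 / √(k : ℝ) * ∑ l ∈ Ico k (b + 1), 1 / ((l : ℝ) * √(l : ℝ)) ≤
      2 / ((k : ℝ) - 1) :=
    calc _ ≤ 1 / √((k : ℝ) - 1) * (2 / √((k : ℝ) - 1)) := by
          gcongr
          exact sum_Ico_one_div_mul_sqrt_le hk (by omega)
      _ = 2 / ((k : ℝ) - 1) := by
          rw [div_mul_div_comm, one_mul, mul_self_sqrt (by linarith)]
  rw [sum_Icc_minWeight hak hkb]
  linarith [show 4 / ((k : ℝ) - 1) = 2 / ((k : ℝ) - 1) + 2 / ((k : ℝ) - 1) by ring]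

lemma le_sum_Icc_minWeight {a b k : ℕ} (ha : 1 ≤ a) (hak : a ≤ k) (hkb : k ≤ b) :
    4 / (k : ℝ) - 2 * √(a : ℝ) * (1 / ((k : ℝ) * √(k : ℝ))) -
        2 / √((b : ℝ) + 1) * (1 / √(k : ℝ)) ≤
      ∑ l ∈ Icc a b, minWeight k l := by
  have hk : (0 : ℝ) < k := by exact_mod_cast ha.trans hak
  have hs : 0 < √(k : ℝ) := sqrt_pos.2 hk
  have below := mul_le_mul_of_nonneg_left (two_mul_sqrt_sub_le_sum_Ico_one_div_sqrt ha hak)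
    (by positivity : 0 ≤ 1 / ((k : ℝ) * √(k : ℝ)))
  have above := mul_le_mul_of_nonneg_left
    (two_div_sqrt_sub_le_sum_Ico_one_div_mul_sqrt (ha.trans hak) (by omega : k ≤ b + 1))
    (by positivity : 0 ≤ 1 / √(k : ℝ))
  rw [sum_Icc_minWeight hak hkb]
  have hkk : √(k : ℝ) * √(k : ℝ) = k := mul_self_sqrt hk.le
  calc _ = 1 / ((k : ℝ) * √(k : ℝ)) * (2 * √(k : ℝ) - 2 * √(a : ℝ)) +
        1 / √(k : ℝ) * (2 / √(k : ℝ) - 2 / √(((b + 1 : ℕ) : ℝ))) := by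
        push_cast; field_simp; linear_combination 2 * √((b : ℝ) + 1) * hkk
    _ ≤ _ := add_le_add below above

lemma minWeightedSum_le {a b : ℕ} (ha : 3 ≤ a) (hab : a ≤ b) :
    minWeightedSum a b ≤ 4 * log b := by
  have ha' : (3 : ℝ) ≤ a := by exact_mod_cast ha
  have hb' : (3 : ℝ) ≤ b := by exact_mod_cast ha.trans hab
  calc minWeightedSum a b ≤ ∑ k ∈ Icc a b, 4 * (1 / ((k : ℝ) - 1)) :=
        sum_le_sum fun k hk ↦ (sum_Icc_minWeight_le (by omega) (by linarith [(mem_Icc.1 hk).1])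
          (mem_Icc.1 hk).1 (mem_Icc.1 hk).2).trans_eq (mul_one_div _ _).symm
    _ ≤ 4 * (log ((b : ℝ) - 1) - log ((a : ℝ) - 2)) := by
        rw [← mul_sum, ← Ico_add_one_right_eq_Icc]
        gcongr
        have h := sum_Ico_one_div_sub_one_le ha (by omega : a ≤ b + 1)
        rwa [show ((b + 1 : ℕ) : ℝ) - 2 = b - 1 by push_cast; ring] at h
    _ ≤ 4 * log b := by
        gcongr
        linarith [log_le_log (by linarith) (by linarith : (b : ℝ) - 1 ≤ b),
          log_nonneg (by linarith : (1 : ℝ) ≤ a - 2)]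

lemma le_minWeightedSum {a b : ℕ} (ha : 2 ≤ a) (hab : a ≤ b) :
    4 * (log ((b : ℝ) + 1) - log a) - 10 ≤ minWeightedSum a b := by
  have ha' : (2 : ℝ) ≤ a := by exact_mod_cast ha
  have harmonic : log ((b : ℝ) + 1) - log a ≤ ∑ k ∈ Icc a b, 1 / (k : ℝ) := by
    rw [← Ico_add_one_right_eq_Icc]
    exact_mod_cast log_sub_log_le_sum_Ico_one_div (by omega) (by omega : a ≤ b + 1)
  have head : 2 * √(a : ℝ) * ∑ k ∈ Icc a b, 1 / ((k : ℝ) * √(k : ℝ)) ≤ 6 := by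
    have hs : 0 < √((a : ℝ) - 1) := sqrt_pos.2 (by linarith)
    have h32 : 2 * √(a : ℝ) ≤ 3 * √((a : ℝ) - 1) := by
      nlinarith [sq_sqrt (by linarith : (0 : ℝ) ≤ a), sq_sqrt (by linarith : (0 : ℝ) ≤ a - 1),
        sqrt_nonneg (a : ℝ)]
    calc _ ≤ 2 * √(a : ℝ) * (2 / √((a : ℝ) - 1)) := by
          rw [← Ico_add_one_right_eq_Icc]
          gcongr
          exact sum_Ico_one_div_mul_sqrt_le ha (by omega)
      _ ≤ 3 * √((a : ℝ) - 1) * (2 / √((a : ℝ) - 1)) := by gcongr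
      _ = 6 := by field_simp; ring
  have tail : 2 / √((b : ℝ) + 1) * ∑ k ∈ Icc a b, 1 / √(k : ℝ) ≤ 4 := by
    have hs : 0 < √((b : ℝ) + 1) := sqrt_pos.2 (by positivity)
    calc _ ≤ 2 / √((b : ℝ) + 1) * (2 * √((b : ℝ) + 1)) := by
          rw [← Ico_add_one_right_eq_Icc]
          gcongr
          refine (sum_Ico_one_div_sqrt_le (by omega) (by omega : a ≤ b + 1)).trans ?_
          gcongr
          push_cast
          linarith
      _ = 4 := by field_simp; ring
  calc _ ≤ ∑ k ∈ Icc a b, (4 * (1 / (k : ℝ)) -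
        2 * √(a : ℝ) * (1 / ((k : ℝ) * √(k : ℝ))) - 2 / √((b : ℝ) + 1) * (1 / √(k : ℝ))) := by
        simp only [sum_sub_distrib, ← mul_sum]
        linarith
    _ ≤ minWeightedSum a b := sum_le_sum fun k hk ↦
        (le_sum_Icc_minWeight (by omega) (mem_Icc.1 hk).1 (mem_Icc.1 hk).2).trans_eq' (by ring)

section CeilFloor

variable {A B : ℝ}

lemma ceil_le_floor_of_add_one_le (hA : 0 ≤ A) (hAB : A + 1 ≤ B) : ⌈A⌉₊ ≤ ⌊B⌋₊ :=
  Nat.le_floor ((Nat.ceil_lt_add_one hA).le.trans hAB)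

lemma minWeightedSum_ceil_floor_le (hA : 2 < A) (hAB : A + 1 ≤ B) :
    minWeightedSum ⌈A⌉₊ ⌊B⌋₊ ≤ 4 * log B := by
  have hab := ceil_le_floor_of_add_one_le (by linarith) hAB
  have hb : (0 : ℝ) < ⌊B⌋₊ := by
    exact_mod_cast (Nat.ceil_pos.2 (by linarith : (0 : ℝ) < A)).trans_le hab
  calc _ ≤ 4 * log ⌊B⌋₊ := minWeightedSum_le (Nat.lt_ceil.2 (by norm_num; linarith)) hab
    _ ≤ 4 * log B := by gcongr; exact Nat.floor_le (by linarith)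

lemma le_minWeightedSum_ceil_floor (hA : 1 < A) (hAB : A + 1 ≤ B) :
    4 * (log B - log (A + 1)) - 10 ≤ minWeightedSum ⌈A⌉₊ ⌊B⌋₊ := by
  have hab := ceil_le_floor_of_add_one_le (by linarith) hAB
  have ha : (0 : ℝ) < ⌈A⌉₊ := by exact_mod_cast Nat.ceil_pos.2 (by linarith : (0 : ℝ) < A)
  have hlogB : log B ≤ log ((⌊B⌋₊ : ℝ) + 1) :=
    log_le_log (by linarith) (Nat.lt_floor_add_one B).le
  have hlogA : log (⌈A⌉₊ : ℝ) ≤ log (A + 1) :=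
    log_le_log ha (Nat.ceil_lt_add_one (by linarith)).le
  linarith [le_minWeightedSum (Nat.lt_ceil.2 (by norm_num; linarith)) hab]

end CeilFloor

lemma eventually_le_mul_of_isLittleO_id {f : ℝ → ℝ} (hf : f =o[atTop] id) {c : ℝ}
    (hc : 0 < c) :
    ∀ᶠ x in atTop, f x ≤ c * x := by
  filter_upwards [hf.bound hc, eventually_ge_atTop 0] with x hx hx0
  simpa [abs_of_nonneg hx0] using (le_abs_self _).trans hx

lemma isLittleO_log_mul_add_one {d : ℝ} (hd : 0 < d) :
    (fun x ↦ log (d * x + 1)) =o[atTop] id := by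
  have hg : Tendsto (fun x : ℝ ↦ d * x + 1) atTop atTop :=
    tendsto_atTop_add_const_right _ 1 (tendsto_id.const_mul_atTop hd)
  have hO : (fun x : ℝ ↦ d * x + 1) =O[atTop] id :=
    ((isBigO_refl id atTop).const_mul_left d).add (isLittleO_const_id_atTop 1).isBigO
  exact (isLittleO_log_id_atTop.comp_tendsto hg).trans_isBigO hO

/-- for any `ε > 0` and fixed constants `c ∈ (0,1)`, `d > 0`, for all
sufficiently large `n` the sum `∑ k^{−3/2}·ℓ^{−3/2}·min(k,ℓ)` over integer pairs `(k,ℓ)`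
with `d·log n ≤ k, ℓ ≤ cn` lies between `(1−ε)·4·log n` and `(1+ε)·4·log n`. -/
theorem min_weighted_double_sum (ε c d : ℝ) (hε : 0 < ε) (hc0 : 0 < c) (hc1 : c < 1)
    (hd : 0 < d) :
    ∃ N : ℕ, ∀ n : ℕ, N ≤ n →
      (1 - ε) * (4 * Real.log n) ≤
        (∑ k ∈ Finset.Icc (⌈d * Real.log n⌉₊) (⌊c * (n : ℝ)⌋₊),
          ∑ l ∈ Finset.Icc (⌈d * Real.log n⌉₊) (⌊c * (n : ℝ)⌋₊),
            (k : ℝ) ^ (-(3 : ℝ) / 2) * (l : ℝ) ^ (-(3 : ℝ) / 2) * (min k l : ℕ)) ∧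
      (∑ k ∈ Finset.Icc (⌈d * Real.log n⌉₊) (⌊c * (n : ℝ)⌋₊),
          ∑ l ∈ Finset.Icc (⌈d * Real.log n⌉₊) (⌊c * (n : ℝ)⌋₊),
            (k : ℝ) ^ (-(3 : ℝ) / 2) * (l : ℝ) ^ (-(3 : ℝ) / 2) * (min k l : ℕ)) ≤
        (1 + ε) * (4 * Real.log n) := by
  have hlog : Tendsto (fun n : ℕ ↦ log n) atTop atTop :=
    tendsto_log_atTop.comp tendsto_natCast_atTop_atTop
  have large : ∀ᶠ n : ℕ in atTop, 3 ≤ d * log n :=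
    hlog.eventually ((tendsto_id.const_mul_atTop hd).eventually_ge_atTop 3)
  have room : ∀ᶠ n : ℕ in atTop, d * log n + 1 ≤ c * n :=
    tendsto_natCast_atTop_atTop.eventually (eventually_le_mul_of_isLittleO_id
      ((isLittleO_log_id_atTop.const_mul_left d).add (isLittleO_const_id_atTop 1)) hc0)
  -- absorbs the constant `-10` and the `log c` lost in the lower bound
  have slack : ∀ᶠ n : ℕ in atTop, log (d * log n + 1) + (5 / 2 - log c) ≤ ε * log n :=
    hlog.eventually (eventually_le_mul_of_isLittleO_id
      ((isLittleO_log_mul_add_one hd).add (isLittleO_const_id_atTop _)) hε)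
  refine eventually_atTop.1 ?_
  filter_upwards [large, room, slack, eventually_gt_atTop 0] with n hA hAB hslack hn
  have hn' : (0 : ℝ) < n := Nat.cast_pos.2 hn
  have hlogn : 0 ≤ log n := by nlinarith
  have hlogcn : log (c * n) = log c + log n := log_mul hc0.ne' hn'.ne'
  have hcn : log (c * n) ≤ log n := log_le_log (by positivity) (by nlinarith)
  have lower := le_minWeightedSum_ceil_floor (by linarith) hAB
  have upper := minWeightedSum_ceil_floor_le (by linarith) hAB
  unfold minWeightedSum minWeight at lower upper
  exact ⟨by linarith, by nlinarith⟩
end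

section
/- Fix positive integers n and sizes k ≤ ℓ with ℓ ≤ cn for a constant c ≤ 1/3 and k ≥ 4. Define g(k,ℓ) as the number of pairs (x,y) of positive integers such that (x,k,y,ℓ) is a good quadruple, meaning: 1 ≤ x < x+k ≤ 2n and 1 ≤ y < y+ℓ ≤ 2n; any two of the numbers x, x+k, y, y+ℓ differ by at least 2; and the intervals interlace (x < y < x+k < y+ℓ or y < x < y+ℓ < x+k). Then (4−6c)·n·(k−3) ≤ g(k,ℓ) ≤ 4·n·k. -/
/-!
For a fixed `y`, interlacing forces `x` into one of the two windows `(y - k, y)` and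
`(y + ℓ - k, y + ℓ)`, so each of the `2n` values of `y` admits fewer than `2k` values of `x`.

Conversely, for each of the `2n + 2 - ℓ - k` admissible left endpoints `a`, the `k - 3` offsets
`2 ≤ d ≤ k - 2` give the good pairs `(a, a + d)` with `x < y`, and the `k - 3` offsets
`ℓ - k + 2 ≤ d ≤ ℓ - 2` give the good pairs `(a + d, a)` with `y < x`.
Since `k ≤ ℓ ≤ cn`, `2 (2n + 2 - ℓ - k) ≥ 4n - 4cn ≥ (4 - 6c) n`.
-/

abbrev GoodQuad (n x k y l : ℕ) : Prop :=
  (1 ≤ x ∧ x + k ≤ 2 * n) ∧ (1 ≤ y ∧ y + l ≤ 2 * n) ∧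
  (x + 2 ≤ y ∨ y + 2 ≤ x) ∧ (x + 2 ≤ y + l ∨ y + l + 2 ≤ x) ∧
  (x + k + 2 ≤ y ∨ y + 2 ≤ x + k) ∧ (x + k + 2 ≤ y + l ∨ y + l + 2 ≤ x + k) ∧
  (x + 2 ≤ x + k) ∧ (y + 2 ≤ y + l) ∧
  ((x < y ∧ y < x + k ∧ x + k < y + l) ∨ (y < x ∧ x < y + l ∧ y + l < x + k))

def goodCount (n k l : ℕ) : ℕ :=
  ((Finset.Icc 1 (2 * n) ×ˢ Finset.Icc 1 (2 * n)).filter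
    (fun p => GoodQuad n p.1 k p.2 l)).card

open Finset

lemma natCast_sub_le_natCast_tsub {R : Type*} [Ring R] [LinearOrder R] [IsStrictOrderedRing R]
    (m n : ℕ) : (m : R) - n ≤ ((m - n : ℕ) : R) := by
  rcases le_total n m with h | h
  · rw [Nat.cast_sub h]
  · rw [Nat.sub_eq_zero_of_le h, Nat.cast_zero, sub_nonpos]
    exact_mod_cast h

section GoodQuad

variable {n x k y l : ℕ}

lemma GoodQuad.mem_window (h : GoodQuad n x k y l) :
    x ∈ Ioo (y - k) y ∪ Ioo (y + l - k) (y + l) := by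
  simp only [mem_union, mem_Ioo]
  omega

lemma goodQuad_snd_eq_add (hkl : k ≤ l) (hx : 1 ≤ x) (hxn : x + l + k ≤ 2 * n + 2)
    {d : ℕ} (hd : 2 ≤ d) (hdk : d + 2 ≤ k) : GoodQuad n x k (x + d) l := by
  omega

lemma goodQuad_fst_eq_add (hkl : k ≤ l) (hy : 1 ≤ y) (hyn : y + l + k ≤ 2 * n + 2)
    {d : ℕ} (hd : l + 2 ≤ d + k) (hdl : d + 2 ≤ l) : GoodQuad n (y + d) k y l := by
  omega

end GoodQuad

def goodPairs (n k l : ℕ) : Finset (ℕ × ℕ) :=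
  {p ∈ Icc 1 (2 * n) ×ˢ Icc 1 (2 * n) | GoodQuad n p.1 k p.2 l}

lemma card_goodPairs_snd_eq_le (n k l y : ℕ) : #{p ∈ goodPairs n k l | p.2 = y} ≤ 2 * k := by
  calc _ ≤ #(Ioo (y - k) y ∪ Ioo (y + l - k) (y + l)) := by
        refine card_le_card_of_injOn Prod.fst ?_ ?_
        · intro p hp
          simp only [goodPairs, coe_filter, Set.mem_ofPred_eq, mem_filter] at hp
          exact hp.2 ▸ hp.1.2.mem_window
        · intro p hp q hq hpq
          simp only [coe_filter, Set.mem_ofPred_eq] at hp hq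
          exact Prod.ext hpq (hp.2.trans hq.2.symm)
    _ ≤ #(Ioo (y - k) y) + #(Ioo (y + l - k) (y + l)) := card_union_le _ _
    _ ≤ 2 * k := by simp only [Nat.card_Ioo]; omega

lemma goodCount_le (n k l : ℕ) : goodCount n k l ≤ 4 * n * k :=
  calc goodCount n k l ≤ 2 * k * #(Icc 1 (2 * n)) :=
        card_le_mul_card_image_of_maps_to (s := goodPairs n k l) (f := Prod.snd)
          (fun _ hp => (mem_product.mp (mem_filter.mp hp).1).2) (2 * k)
          (fun y _ => card_goodPairs_snd_eq_le n k l y)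
    _ = 4 * n * k := by rw [Nat.card_Icc, Nat.add_sub_cancel]; ring

lemma goodCount_ge (n k l : ℕ) (hkl : k ≤ l) :
    2 * (2 * n + 2 - (l + k)) * (k - 3) ≤ goodCount n k l := by
  set M := 2 * n + 2 - (l + k)
  set below := (Icc 1 M ×ˢ Icc 2 (k - 2)).image fun p => (p.1, p.1 + p.2)
  set above := (Icc 1 M ×ˢ Icc (l - k + 2) (l - 2)).image fun p => (p.1 + p.2, p.1)
  have h_below : #below = M * (k - 3) := by
    rw [card_image_of_injective _ fun p q h => by simp only [Prod.mk.injEq] at h; ext <;> omega,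
      card_product, Nat.card_Icc, Nat.card_Icc]
    exact congrArg₂ (· * ·) (by omega) (by omega)
  have h_above : #above = M * (k - 3) := by
    rw [card_image_of_injective _ fun p q h => by simp only [Prod.mk.injEq] at h; ext <;> omega,
      card_product, Nat.card_Icc, Nat.card_Icc]
    exact congrArg₂ (· * ·) (by omega) (by omega)
  have h_disj : Disjoint below above := by
    simp only [below, above, disjoint_left, mem_image, mem_product, mem_Icc]
    rintro _ ⟨⟨a, d⟩, -, rfl⟩ ⟨⟨a', d'⟩, ⟨-, hd', -⟩, h⟩
    simp only [Prod.mk.injEq] at h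
    omega
  have h_sub : below ∪ above ⊆ goodPairs n k l := by
    refine union_subset ?_ ?_ <;>
      simp only [goodPairs, below, above, M, subset_iff, mem_image, mem_product, mem_Icc,
        mem_filter]
    · rintro _ ⟨⟨a, d⟩, ⟨⟨ha, haM⟩, hd, hdk⟩, rfl⟩
      exact ⟨by omega, goodQuad_snd_eq_add hkl ha (by omega) hd (by omega)⟩
    · rintro _ ⟨⟨a, d⟩, ⟨⟨ha, haM⟩, hd, hdl⟩, rfl⟩
      exact ⟨by omega, goodQuad_fst_eq_add hkl ha (by omega) (by omega) (by omega)⟩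
  calc 2 * M * (k - 3) = #(below ∪ above) := by
        rw [card_union_of_disjoint h_disj, h_below, h_above]; ring
    _ ≤ goodCount n k l := card_le_card h_sub

theorem goodCount_bounds_general (n k l : ℕ) (c : ℝ)
    (hk : 4 ≤ k) (hkl : k ≤ l) (hl : (l : ℝ) ≤ c * n) :
    (4 - 6 * c) * (n : ℝ) * ((k : ℝ) - 3) ≤ (goodCount n k l : ℝ) ∧
      (goodCount n k l : ℝ) ≤ 4 * (n : ℝ) * (k : ℝ) := by
  have hk3 : (0 : ℝ) ≤ k - 3 := by
    have : (4 : ℝ) ≤ k := by exact_mod_cast hk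
    linarith
  have hklR : (k : ℝ) ≤ l := by exact_mod_cast hkl
  have hlow : 2 * ((2 * n + 2 - (l + k) : ℕ) : ℝ) * (k - 3) ≤ goodCount n k l := by
    have := Nat.cast_le (α := ℝ).mpr (goodCount_ge n k l hkl)
    push_cast [Nat.cast_sub (by omega : 3 ≤ k)] at this
    exact this
  have hwidth := natCast_sub_le_natCast_tsub (R := ℝ) (2 * n + 2) (l + k)
  push_cast at hwidth
  refine ⟨?_, by exact_mod_cast goodCount_le n k l⟩
  calc (4 - 6 * c) * (n : ℝ) * (k - 3) ≤ 2 * (2 * n + 2 - (l + k)) * (k - 3) := by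
        refine mul_le_mul_of_nonneg_right ?_ hk3
        linarith [(Nat.cast_nonneg l : (0 : ℝ) ≤ l)]
    _ ≤ 2 * ((2 * n + 2 - (l + k) : ℕ) : ℝ) * (k - 3) := by gcongr
    _ ≤ goodCount n k l := hlow

/-- for `4 ≤ k ≤ ℓ ≤ cn` with `c ≤ 1/3`, the count `g(k,ℓ)` of good
quadruples satisfies `(4−6c)·n·(k−3) ≤ g(k,ℓ) ≤ 4·n·k`. -/
theorem goodCount_bounds (n k l : ℕ) (c : ℝ) (hc0 : 0 < c) (hc : c ≤ 1 / 3)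
    (hk : 4 ≤ k) (hkl : k ≤ l) (hl : (l : ℝ) ≤ c * n) :
    (4 - 6 * c) * (n : ℝ) * ((k : ℝ) - 3) ≤ (goodCount n k l : ℝ) ∧
      (goodCount n k l : ℝ) ≤ 4 * (n : ℝ) * (k : ℝ) :=
  goodCount_bounds_general n k l c hk hkl hl
end

section
/- For positive integers k ≤ ℓ ≤ 2n, the number of pairs (x,y) such that 1 ≤ x < x+k ≤ 2n, 1 ≤ y < y+ℓ ≤ 2n and the intervals [x,x+k] and [y,y+ℓ] interlace (i.e., x < y < x+k < y+ℓ or y < x < y+ℓ < x+k) is at most 4nk. -/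
/-! For a fixed `y`, an interval `[x, x + k]` interlaces `[y, y + ℓ]` only if its left end `x`
lies in one of the two windows `(y - k, y)` or `(y + ℓ - k, y + ℓ)`, each containing fewer than
`k` integers. So every `y` contributes at most `2k` pairs, and there are at most `2n` choices
of `y`. -/

open Finset

theorem card_Ico_add_one_sub_le (m k : ℕ) : #(Ico (m + 1 - k) m) ≤ k := by
  rw [Nat.card_Ico]
  omega

theorem mem_Ico_add_one_sub_iff {x m k : ℕ} :
    x ∈ Ico (m + 1 - k) m ↔ x < m ∧ m < x + k := by
  rw [mem_Ico]
  omega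

theorem card_le_of_forall_lt_lt_add (P : Finset (ℕ × ℕ)) (t : Finset ℕ) (k l : ℕ)
    (hP : ∀ p ∈ P, p.2 ∈ t ∧
      ((p.1 < p.2 ∧ p.2 < p.1 + k) ∨ (p.1 < p.2 + l ∧ p.2 + l < p.1 + k))) :
    #P ≤ 2 * k * #t := by
  refine card_le_mul_card_image_of_maps_to (fun p hp => (hP p hp).1) _ fun y _ => ?_
  have hmaps : ∀ p ∈ {p ∈ P | p.2 = y},
      p.1 ∈ Ico (y + 1 - k) y ∪ Ico (y + l + 1 - k) (y + l) := by
    intro p hp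
    rw [mem_filter] at hp
    obtain ⟨hpP, rfl⟩ := hp
    rw [mem_union, mem_Ico_add_one_sub_iff, mem_Ico_add_one_sub_iff]
    exact (hP p hpP).2
  have hinj : Set.InjOn Prod.fst (P.filter (·.2 = y) : Set (ℕ × ℕ)) := by
    intro p hp q hq h
    rw [mem_coe, mem_filter] at hp hq
    exact Prod.ext h (hp.2.trans hq.2.symm)
  calc #{p ∈ P | p.2 = y}
      ≤ #(Ico (y + 1 - k) y ∪ Ico (y + l + 1 - k) (y + l)) := card_le_card_of_injOn _ hmaps hinj
    _ ≤ #(Ico (y + 1 - k) y) + #(Ico (y + l + 1 - k) (y + l)) := card_union_le _ _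
    _ ≤ 2 * k := by linarith [card_Ico_add_one_sub_le y k, card_Ico_add_one_sub_le (y + l) k]

theorem interlacing_pairs_le_general (n k l : ℕ) :
    ((Finset.Icc 1 (2 * n) ×ˢ Finset.Icc 1 (2 * n)).filter
        (fun p : ℕ × ℕ =>
          1 ≤ p.1 ∧ p.1 + k ≤ 2 * n ∧ 1 ≤ p.2 ∧ p.2 + l ≤ 2 * n ∧
          ((p.1 < p.2 ∧ p.2 < p.1 + k ∧ p.1 + k < p.2 + l) ∨
            (p.2 < p.1 ∧ p.1 < p.2 + l ∧ p.2 + l < p.1 + k)))).card ≤ 4 * n * k := by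
  refine (card_le_of_forall_lt_lt_add _ (Icc 1 (2 * n)) k l fun p hp => ?_).trans ?_
  · rw [mem_filter, mem_product] at hp
    obtain ⟨⟨-, hy⟩, -, -, -, -, hinterlace⟩ := hp
    exact ⟨hy, by omega⟩
  · rw [Nat.card_Icc, Nat.add_sub_cancel]
    linarith

/-- for positive integers `k ≤ ℓ ≤ 2n`, the number of pairs `(x,y)` with
`1 ≤ x < x + k ≤ 2n`, `1 ≤ y < y + ℓ ≤ 2n` whose intervals interlace is at most `4nk`. -/
theorem interlacing_pairs_le (n k l : ℕ) (hk : 1 ≤ k) (hkl : k ≤ l) (hl : l ≤ 2 * n) :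
    ((Finset.Icc 1 (2 * n) ×ˢ Finset.Icc 1 (2 * n)).filter
        (fun p : ℕ × ℕ =>
          1 ≤ p.1 ∧ p.1 + k ≤ 2 * n ∧ 1 ≤ p.2 ∧ p.2 + l ≤ 2 * n ∧
          ((p.1 < p.2 ∧ p.2 < p.1 + k ∧ p.1 + k < p.2 + l) ∨
            (p.2 < p.1 ∧ p.1 < p.2 + l ∧ p.2 + l < p.1 + k)))).card ≤ 4 * n * k :=
  interlacing_pairs_le_general n k l
end

section
/- Let H be a Catalan-pair graph on v vertices with i isolated vertices, let H'' denote H with its isolated vertices removed, and consider any two-sided non-crossing arc diagram on 2n points. If N' denotes the number of vertex sets inducing a copy of H'' all of whose arcs have both endpoints in the interval [1, n/2], then the number N of induced copies of H satisfies N ≥ N'·binom(⌈n/4⌉, i). (Deterministic statement: at most n/2 arcs have an endpoint in [1,n/2], so at least n/2 arcs lie entirely outside; at least n/4 of these have the same color, and adjoining any i of these same-colored arcs to an induced copy of H'' in [1,n/2] yields an induced copy of H.) -/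
/-- A family of arcs, each recorded as an ordered pair of endpoints: endpoints are
pairwise distinct across arcs, and the arcs are pairwise non-crossing. -/
def IsArcFamily (M : Finset (ℕ × ℕ)) : Prop :=
  (∀ p ∈ M, p.1 < p.2) ∧
  (∀ p ∈ M, ∀ q ∈ M, p ≠ q → p.1 ≠ q.1 ∧ p.1 ≠ q.2 ∧ p.2 ≠ q.1 ∧ p.2 ≠ q.2) ∧
  (∀ p ∈ M, ∀ q ∈ M, ¬(p.1 < q.1 ∧ q.1 < p.2 ∧ p.2 < q.2))

/-- A two-sided non-crossing arc diagram on the `2n` points `1,…,2n`: a non-crossing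
perfect matching `R` of the red points and a non-crossing perfect matching `B` of the
blue points, which together cover each of the `2n` points exactly once. -/
def IsTwoSidedDiagram (n : ℕ) (R B : Finset (ℕ × ℕ)) : Prop :=
  IsArcFamily R ∧ IsArcFamily B ∧
  (∀ x, x ∈ Finset.Icc 1 (2 * n) ↔
      ((∃ p ∈ R, x = p.1 ∨ x = p.2) ∨ (∃ p ∈ B, x = p.1 ∨ x = p.2))) ∧
  (∀ p ∈ R, ∀ q ∈ B, p.1 ≠ q.1 ∧ p.1 ≠ q.2 ∧ p.2 ≠ q.1 ∧ p.2 ≠ q.2)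

/-- Two arcs have alternating endpoints along the line. -/
def alternates (p q : ℕ × ℕ) : Prop :=
  (p.1 < q.1 ∧ q.1 < p.2 ∧ p.2 < q.2) ∨ (q.1 < p.1 ∧ p.1 < q.2 ∧ q.2 < p.2)

/-- The Catalan-pair graph of a diagram with top arcs `R` and bottom arcs `B`: vertices
are arcs (left summand = top, right summand = bottom), and two vertices are adjacent iff
both are genuine arcs of the diagram and their endpoints alternate. -/
def CPGraph (R B : Finset (ℕ × ℕ)) : SimpleGraph ((ℕ × ℕ) ⊕ (ℕ × ℕ)) where
  Adj u v := Sum.elim (· ∈ R) (· ∈ B) u ∧ Sum.elim (· ∈ R) (· ∈ B) v ∧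
    alternates (Sum.elim id id u) (Sum.elim id id v)
  symm := by
    constructor
    intro u v h
    refine ⟨h.2.1, h.1, ?_⟩
    unfold alternates at *
    tauto
  loopless := by
    constructor
    intro u h
    rcases h.2.2 with ⟨h1, _, _⟩ | ⟨h1, _, _⟩ <;> exact lt_irrefl _ h1

/-!
Split the line at `m = ⌊n/2⌋`. Distinct arcs have distinct left endpoints, all at least `1`,
so at most `m` arcs start in `[1, m]`; since there are `n` arcs, at least `n - m` start beyond
`m`, and at least `⌈n/4⌉` of those have the same colour, hence are pairwise non-adjacent.
Such an arc neither alternates with nor equals an arc inside `[1, m]`. So adjoining any `i` of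
them to a copy of `H''` inside `[1, m]` gives an induced copy of `H` (the new arcs play the
isolated vertices), and the copy of `H''` and the adjoined arcs are recovered from the union as
its parts inside and beyond `m`.
-/

namespace SimpleGraph

variable {V W : Type*}

def Iso.induceUnion (G : SimpleGraph W) {s t : Set W} [DecidablePred (· ∈ s)]
    (hst : Disjoint s t) (hno : ∀ a ∈ s, ∀ b ∈ t, ¬G.Adj a b) :
    G.induce s ⊕g G.induce t ≃g G.induce (s ∪ t) where
  toEquiv := (Equiv.Set.union hst).symm
  map_rel_iff' {x y} := by
    rcases x with ⟨a, ha⟩ | ⟨a, ha⟩ <;> rcases y with ⟨b, hb⟩ | ⟨b, hb⟩ <;>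
      simp only [Equiv.Set.union_symm_apply_left, Equiv.Set.union_symm_apply_right, comap_adj,
        Function.Embedding.subtype_apply, sum_adj, iff_false]
    exacts [hno a ha b hb, fun h => hno b hb a ha h.symm]

def Iso.sumCompl (G : SimpleGraph V) (s : Set V) [DecidablePred (· ∈ s)]
    (hno : ∀ a ∈ s, ∀ b ∉ s, ¬G.Adj a b) :
    G.induce s ⊕g G.induce sᶜ ≃g G where
  toEquiv := Equiv.Set.sumCompl s
  map_rel_iff' {x y} := by
    rcases x with ⟨a, ha⟩ | ⟨a, ha⟩ <;> rcases y with ⟨b, hb⟩ | ⟨b, hb⟩ <;>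
      simp only [Equiv.Set.sumCompl_apply_inl, Equiv.Set.sumCompl_apply_inr, comap_adj,
        Function.Embedding.subtype_apply, sum_adj, iff_false]
    exacts [hno a ha b hb, fun h => hno b hb a ha h.symm]

def Iso.ofForallNotAdj {G : SimpleGraph V} {G' : SimpleGraph W} (f : V ≃ W)
    (hG : ∀ a b, ¬G.Adj a b) (hG' : ∀ a b, ¬G'.Adj a b) : G ≃g G' where
  toEquiv := f
  map_rel_iff' := by simp [hG, hG']

theorem nonempty_iso_induce_union_of_isolated [Finite V] {H : SimpleGraph V}
    {G : SimpleGraph W} {S T : Set W} [Finite T]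
    (e : H.induce {v | ∃ w, H.Adj v w} ≃g G.induce S) (hST : Disjoint S T)
    (hcross : ∀ a ∈ S, ∀ b ∈ T, ¬G.Adj a b) (hT : ∀ a ∈ T, ∀ b ∈ T, ¬G.Adj a b)
    (hcard : Nat.card {v // ∀ w, ¬H.Adj v w} = Nat.card T) :
    Nonempty (H ≃g G.induce (S ∪ T)) := by
  classical
  set s := {v | ∃ w, H.Adj v w}
  have hisolated : Nat.card ↥sᶜ = Nat.card T := by
    rw [← hcard]
    exact Nat.card_congr (Equiv.subtypeEquivRight fun v => by simp [s])
  obtain ⟨f⟩ := Finite.card_eq.mp hisolated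
  have hsplit : ∀ a ∈ s, ∀ b ∉ s, ¬H.Adj a b := fun a _ b hb h => hb ⟨a, h.symm⟩
  exact ⟨(Iso.sumCompl H s hsplit).symm.trans <|
    (e.sumCongr (Iso.ofForallNotAdj f (fun a b h => a.2 ⟨b, h⟩)
      (fun a b => hT a a.2 b b.2))).trans (Iso.induceUnion G hST hcross)⟩

end SimpleGraph

theorem natCard_mul_choose_le_of_union_mem {W : Type*} [DecidableEq W]
    {P Q : Finset W → Prop} [Finite {S // Q S}] (T₀ : Finset W) (k : ℕ)
    (hdisj : ∀ S, P S → Disjoint S T₀)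
    (hunion : ∀ S T, P S → T ⊆ T₀ → T.card = k → Q (S ∪ T)) :
    Nat.card {S // P S} * T₀.card.choose k ≤ Nat.card {S // Q S} := by
  let Φ : {S // P S} × T₀.powersetCard k → {S // Q S} := fun x =>
    ⟨x.1 ∪ x.2, hunion _ _ x.1.2 (Finset.mem_powersetCard.1 x.2.2).1
      (Finset.mem_powersetCard.1 x.2.2).2⟩
  have hΦ : Function.Injective Φ := by
    rintro ⟨⟨S, hS⟩, ⟨T, hT⟩⟩ ⟨⟨S', hS'⟩, ⟨T', hT'⟩⟩ h
    have hU : S ∪ T = S' ∪ T' := congrArg Subtype.val h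
    have hTT₀ := (Finset.mem_powersetCard.1 hT).1
    have hT'T₀ := (Finset.mem_powersetCard.1 hT').1
    have hS_eq : S = S' := by
      have := congrArg (· \ T₀) hU
      simp only [Finset.union_sdiff_distrib, Finset.sdiff_eq_empty_iff_subset.2 hTT₀,
        Finset.sdiff_eq_empty_iff_subset.2 hT'T₀, (hdisj S hS).sdiff_eq_left,
        (hdisj S' hS').sdiff_eq_left, Finset.union_empty] at this
      exact this
    have hT_eq : T = T' := by
      have := congrArg (· ∩ T₀) hU
      simp only [Finset.union_inter_distrib_right,
        Finset.disjoint_iff_inter_eq_empty.1 (hdisj S hS),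
        Finset.disjoint_iff_inter_eq_empty.1 (hdisj S' hS'), Finset.inter_eq_left.2 hTT₀,
        Finset.inter_eq_left.2 hT'T₀, Finset.empty_union] at this
      exact this
    subst hS_eq hT_eq
    rfl
  calc Nat.card {S // P S} * T₀.card.choose k
      = Nat.card ({S // P S} × T₀.powersetCard k) := by
        rw [Nat.card_prod, Nat.card_eq_finsetCard, Finset.card_powersetCard]
    _ ≤ Nat.card {S // Q S} := Nat.card_le_card_of_injective Φ hΦ

theorem finite_subtype_finset_forall_mem {α : Type*} {p : α → Prop} (hp : {a | p a}.Finite)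
    (X : Finset α → Prop) : Finite {S : Finset α // (∀ a ∈ S, p a) ∧ X S} :=
  Finite.of_injective
    (fun S => (⟨S.1, Finset.mem_powerset.2 fun a ha => hp.mem_toFinset.2 (S.2.1 a ha)⟩ :
      hp.toFinset.powerset))
    fun _ _ h => Subtype.ext (Subtype.ext_iff.1 h :)

def endpoints (M : Finset (ℕ × ℕ)) : Finset ℕ :=
  M.biUnion fun p => {p.1, p.2}

theorem mem_endpoints {M : Finset (ℕ × ℕ)} {x : ℕ} :
    x ∈ endpoints M ↔ ∃ p ∈ M, x = p.1 ∨ x = p.2 := by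
  simp [endpoints]

namespace IsArcFamily

variable {M : Finset (ℕ × ℕ)}

theorem card_endpoints (hM : IsArcFamily M) : (endpoints M).card = 2 * M.card := by
  rw [endpoints, Finset.card_biUnion, Finset.sum_const_nat fun p hp =>
    Finset.card_pair (hM.1 p hp).ne, mul_comm]
  intro p hp q hq hpq
  have := hM.2.1 p hp q hq hpq
  simp only [Function.onFun, Finset.disjoint_insert_left, Finset.disjoint_insert_right,
    Finset.disjoint_singleton, Finset.mem_insert, Finset.mem_singleton]
  omega

theorem not_alternates (hM : IsArcFamily M) {p q : ℕ × ℕ} (hp : p ∈ M) (hq : q ∈ M) :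
    ¬alternates p q := by
  rintro (h | h)
  exacts [hM.2.2 p hp q hq h, hM.2.2 q hq p hp h]

end IsArcFamily

theorem not_alternates_of_snd_lt_fst {p q : ℕ × ℕ} (h : p.2 < q.1) : ¬alternates p q := by
  unfold alternates
  omega

namespace CPGraph

variable {R B : Finset (ℕ × ℕ)}

theorem finite_setOf_mem : {a | Sum.elim (· ∈ R) (· ∈ B) a}.Finite :=
  (R.disjSum B).finite_toSet.subset (by rintro (p | p) h <;> simpa using h)

theorem not_adj_inl (hR : IsArcFamily R) (p q : ℕ × ℕ) :
    ¬(CPGraph R B).Adj (.inl p) (.inl q) :=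
  fun hadj => hR.not_alternates hadj.1 hadj.2.1 hadj.2.2

theorem not_adj_inr (hB : IsArcFamily B) (p q : ℕ × ℕ) :
    ¬(CPGraph R B).Adj (.inr p) (.inr q) :=
  fun hadj => hB.not_alternates hadj.1 hadj.2.1 hadj.2.2

end CPGraph

namespace IsTwoSidedDiagram

variable {n : ℕ} {R B : Finset (ℕ × ℕ)}

theorem endpoints_union (h : IsTwoSidedDiagram n R B) :
    endpoints R ∪ endpoints B = Finset.Icc 1 (2 * n) := by
  ext x
  rw [h.2.2.1 x, Finset.mem_union, mem_endpoints, mem_endpoints]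

theorem disjoint_endpoints (h : IsTwoSidedDiagram n R B) :
    Disjoint (endpoints R) (endpoints B) := by
  rw [Finset.disjoint_left]
  rintro x hR hB
  obtain ⟨p, hp, hx⟩ := mem_endpoints.1 hR
  obtain ⟨q, hq, hy⟩ := mem_endpoints.1 hB
  have := h.2.2.2 p hp q hq
  omega

theorem disjoint (h : IsTwoSidedDiagram n R B) : Disjoint R B :=
  Finset.disjoint_left.2 fun p hR hB => (h.2.2.2 p hR p hB).1 rfl

theorem card_union (h : IsTwoSidedDiagram n R B) : (R ∪ B).card = n := by
  have := congrArg Finset.card h.endpoints_union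
  rw [Finset.card_union_of_disjoint h.disjoint_endpoints, h.1.card_endpoints,
    h.2.1.card_endpoints, Nat.card_Icc] at this
  rw [Finset.card_union_of_disjoint h.disjoint]
  omega

theorem one_le_fst (h : IsTwoSidedDiagram n R B) {p : ℕ × ℕ} (hp : p ∈ R ∪ B) :
    1 ≤ p.1 := by
  have : p.1 ∈ Finset.Icc 1 (2 * n) := by
    rw [← h.endpoints_union, Finset.mem_union, mem_endpoints, mem_endpoints]
    rcases Finset.mem_union.1 hp with hp | hp
    exacts [Or.inl ⟨p, hp, Or.inl rfl⟩, Or.inr ⟨p, hp, Or.inl rfl⟩]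
  exact (Finset.mem_Icc.1 this).1

theorem injOn_fst (h : IsTwoSidedDiagram n R B) :
    Set.InjOn Prod.fst (↑(R ∪ B) : Set (ℕ × ℕ)) := by
  intro p hp q hq hpq
  by_contra hne
  simp only [Finset.coe_union, Set.mem_union, Finset.mem_coe] at hp hq
  rcases hp with hp | hp <;> rcases hq with hq | hq
  · exact (h.1.2.1 p hp q hq hne).1 hpq
  · exact (h.2.2.2 p hp q hq).1 hpq
  · exact (h.2.2.2 q hq p hp).1 hpq.symm
  · exact (h.2.1.2.1 p hp q hq hne).1 hpq

theorem card_filter_fst_le (h : IsTwoSidedDiagram n R B) (m : ℕ) :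
    ((R ∪ B).filter (·.1 ≤ m)).card ≤ m := by
  calc ((R ∪ B).filter (·.1 ≤ m)).card ≤ (Finset.Icc 1 m).card :=
        Finset.card_le_card_of_injOn Prod.fst
          (fun p hp => Finset.mem_Icc.2 ⟨h.one_le_fst (Finset.mem_filter.1 hp).1,
            (Finset.mem_filter.1 hp).2⟩)
          (h.injOn_fst.mono (Finset.coe_subset.2 (Finset.filter_subset _ _)))
    _ = m := by simp

theorem sub_le_card_filter_lt_fst (h : IsTwoSidedDiagram n R B) (m : ℕ) :
    n - m ≤ (R.filter (m < ·.1)).card + (B.filter (m < ·.1)).card := by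
  have hsplit := Finset.card_filter_add_card_filter_not (s := R ∪ B) (m < ·.1)
  have := h.card_filter_fst_le m
  simp only [not_lt, h.card_union] at hsplit
  rw [Finset.filter_union, Finset.card_union_of_disjoint
    (Finset.disjoint_filter_filter h.disjoint)] at hsplit
  omega

theorem fst_lt_snd (h : IsTwoSidedDiagram n R B) {a : (ℕ × ℕ) ⊕ (ℕ × ℕ)}
    (ha : Sum.elim (· ∈ R) (· ∈ B) a) : (Sum.elim id id a).1 < (Sum.elim id id a).2 := by
  rcases a with p | p
  exacts [h.1.1 p ha, h.2.1.1 p ha]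

theorem exists_independent_arcs_fst_gt (h : IsTwoSidedDiagram n R B) (m : ℕ) :
    ∃ T₀ : Finset ((ℕ × ℕ) ⊕ (ℕ × ℕ)), (n - m + 1) / 2 ≤ T₀.card ∧
      (∀ a ∈ T₀, Sum.elim (· ∈ R) (· ∈ B) a ∧ m < (Sum.elim id id a).1) ∧
      ∀ a ∈ T₀, ∀ b ∈ T₀, ¬(CPGraph R B).Adj a b := by
  have := h.sub_le_card_filter_lt_fst m
  by_cases hRB : (B.filter (m < ·.1)).card ≤ (R.filter (m < ·.1)).card
  · refine ⟨(R.filter (m < ·.1)).map .inl, by simp only [Finset.card_map]; omega, ?_, ?_⟩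
    · simp only [Finset.forall_mem_map]
      exact fun p hp => Finset.mem_filter.1 hp
    · simp only [Finset.forall_mem_map]
      intro p _ q _
      exact CPGraph.not_adj_inl h.1 p q
  · refine ⟨(B.filter (m < ·.1)).map .inr, by simp only [Finset.card_map]; omega, ?_, ?_⟩
    · simp only [Finset.forall_mem_map]
      exact fun p hp => Finset.mem_filter.1 hp
    · simp only [Finset.forall_mem_map]
      intro p _ q _
      exact CPGraph.not_adj_inr h.2.1 p q

end IsTwoSidedDiagram

theorem induced_copies_lower_bound_general {V : Type} [Fintype V] (H : SimpleGraph V)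
    (n : ℕ) (R B : Finset (ℕ × ℕ)) (hdiag : IsTwoSidedDiagram n R B) :
    Nat.card {S : Finset ((ℕ × ℕ) ⊕ (ℕ × ℕ)) //
        (∀ a ∈ S, Sum.elim (· ∈ R) (· ∈ B) a) ∧
        (∀ a ∈ S, 1 ≤ (Sum.elim id id a).1 ∧ (Sum.elim id id a).2 ≤ n / 2) ∧
        Nonempty ((H.induce {v : V | ∃ w, H.Adj v w}) ≃g
          (CPGraph R B).induce (↑S : Set ((ℕ × ℕ) ⊕ (ℕ × ℕ))))} *
      Nat.choose ((n + 3) / 4) (Nat.card {v : V // ∀ w, ¬H.Adj v w}) ≤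
    Nat.card {S : Finset ((ℕ × ℕ) ⊕ (ℕ × ℕ)) //
        (∀ a ∈ S, Sum.elim (· ∈ R) (· ∈ B) a) ∧
        Nonempty (H ≃g (CPGraph R B).induce (↑S : Set ((ℕ × ℕ) ⊕ (ℕ × ℕ))))} := by
  classical
  obtain ⟨T₀, hcard, hfar, hindep⟩ := hdiag.exists_independent_arcs_fst_gt (n / 2)
  have := finite_subtype_finset_forall_mem (CPGraph.finite_setOf_mem (R := R) (B := B))
    (fun S => Nonempty (H ≃g (CPGraph R B).induce (↑S : Set ((ℕ × ℕ) ⊕ (ℕ × ℕ)))))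
  have hdisj : ∀ S : Finset ((ℕ × ℕ) ⊕ (ℕ × ℕ)),
      (∀ a ∈ S, Sum.elim (· ∈ R) (· ∈ B) a) →
      (∀ a ∈ S, (Sum.elim id id a).2 ≤ n / 2) → Disjoint S T₀ := by
    refine fun S hgen hnear => Finset.disjoint_left.2 fun a hS hT => ?_
    have := hdiag.fst_lt_snd (hgen a hS)
    have := hnear a hS
    have := (hfar a hT).2
    omega
  refine (Nat.mul_le_mul_left _ (Nat.choose_le_choose _ (by omega : _ ≤ T₀.card))).trans <|
    natCard_mul_choose_le_of_union_mem T₀ _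
      (fun S ⟨hgen, hnear, _⟩ => hdisj S hgen fun a ha => (hnear a ha).2) ?_
  rintro S T ⟨hgen, hnear, ⟨e⟩⟩ hT hTcard
  have hTfar : ∀ a ∈ T, _ := fun a ha => hfar a (hT ha)
  refine ⟨fun a ha => (Finset.mem_union.1 ha).elim (hgen a) fun ha => (hTfar a ha).1, ?_⟩
  rw [Finset.coe_union]
  refine SimpleGraph.nonempty_iso_induce_union_of_isolated e ?_ ?_ ?_ ?_
  · exact Finset.disjoint_coe.2 ((hdisj S hgen fun a ha => (hnear a ha).2).mono_right hT)
  · exact fun a ha b hb hadj => not_alternates_of_snd_lt_fst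
      ((hnear a ha).2.trans_lt (hTfar b hb).2) hadj.2.2
  · exact fun a ha b hb => hindep a (hT ha) b (hT hb)
  · rw [Nat.card_coe_set_eq, Set.ncard_coe_finset, hTcard]

/-- let `H` be a Catalan-pair graph with `i` isolated vertices and let
`H''` be `H` with its isolated vertices removed.  In any two-sided non-crossing arc
diagram on `2n` points, if `N'` is the number of vertex sets inducing a copy of `H''`
all of whose arcs have both endpoints in `[1, ⌊n/2⌋]`, then the number `N` of vertex
sets inducing a copy of `H` satisfies `N ≥ N'·C(⌈n/4⌉, i)`. -/
theorem induced_copies_lower_bound {V : Type} [Fintype V] (H : SimpleGraph V)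
    (hH : ∃ (n' : ℕ) (R' B' : Finset (ℕ × ℕ)), IsTwoSidedDiagram n' R' B' ∧
      Nonempty (H ≃g (CPGraph R' B').induce
        {a : (ℕ × ℕ) ⊕ (ℕ × ℕ) | Sum.elim (· ∈ R') (· ∈ B') a}))
    (n : ℕ) (R B : Finset (ℕ × ℕ)) (hdiag : IsTwoSidedDiagram n R B) :
    Nat.card {S : Finset ((ℕ × ℕ) ⊕ (ℕ × ℕ)) //
        (∀ a ∈ S, Sum.elim (· ∈ R) (· ∈ B) a) ∧
        (∀ a ∈ S, 1 ≤ (Sum.elim id id a).1 ∧ (Sum.elim id id a).2 ≤ n / 2) ∧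
        Nonempty ((H.induce {v : V | ∃ w, H.Adj v w}) ≃g
          (CPGraph R B).induce (↑S : Set ((ℕ × ℕ) ⊕ (ℕ × ℕ))))} *
      Nat.choose ((n + 3) / 4) (Nat.card {v : V // ∀ w, ¬H.Adj v w}) ≤
    Nat.card {S : Finset ((ℕ × ℕ) ⊕ (ℕ × ℕ)) //
        (∀ a ∈ S, Sum.elim (· ∈ R) (· ∈ B) a) ∧
        Nonempty (H ≃g (CPGraph R B).induce (↑S : Set ((ℕ × ℕ) ⊕ (ℕ × ℕ))))} :=
  induced_copies_lower_bound_general H n R B hdiag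
end
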